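/- arXiv:2504.14874 — 4 statements merged into one kernel-verified Lean document; each statement's English description precedes it below -/
import Mathlib

section
/- Let V : ℝ → ℝ be a nonnegative function, let ζ > 0, C4 > 0, C1, C2 ∈ ℝ, let n be a natural number, and let 0 = s₀ ≤ h₁ ≤ s₁ ≤ h₂ ≤ … ≤ hₙ ≤ sₙ ≤ t be real numbers (safe intervals [s_{k−1}, h_k], attack intervals [h_k, s_k], and a final safe interval [sₙ, t]). Suppose: (i) for every k ∈ {1,…,n} and every t′ ∈ [s_{k−1}, h_k], V(t′) ≤ ζ·e^{−C1·(t′ − s_{k−1})}·V(s_{k−1}), and also V(t) ≤ ζ·e^{−C1·(t − sₙ)}·V(sₙ); (ii) for every k ∈ {1,…,n} and every t′ ∈ [h_k, s_k], V(t′) ≤ ζ·C4·e^{C2·(t′ − h_k)}·V(h_k). Then, with Ω := Σ_{k=1}^{n} (s_k − h_k) the total attack duration, V(t) ≤ ζ^{2n+1}·C4^{n}·e^{−C1·(t − Ω)}·e^{C2·Ω}·V(0). -/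
/-- The iterated switching bound of Theorem 1: with safe intervals
`[s (k-1), h k]` (exponential decay at rate `C1`, comparison factor `ζ`), attack
intervals `[h k, s k]` (exponential growth at rate `C2`, amplification factor `ζ·C4`),
`s 0 = 0`, a final safe interval `[s n, t]`, and total attack duration
`Ω = Σ_{k=1}^{n} (s k - h k)`, chaining the per-interval bounds yields
`V t ≤ ζ^{2n+1} · C4^n · e^{-C1·(t - Ω)} · e^{C2·Ω} · V 0`. -/
theorem stmt_2 (V : ℝ → ℝ) (hV : ∀ x, 0 ≤ V x)
    (ζ C4 : ℝ) (hζ : 0 < ζ) (hC4 : 0 < C4) (C1 C2 : ℝ)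
    (n : ℕ) (s h : ℕ → ℝ) (t : ℝ)
    (hs0 : s 0 = 0)
    (horder : ∀ k, 1 ≤ k → k ≤ n → s (k - 1) ≤ h k ∧ h k ≤ s k)
    (hlast : s n ≤ t)
    (hsafe : ∀ k, 1 ≤ k → k ≤ n → ∀ t' ∈ Set.Icc (s (k - 1)) (h k),
      V t' ≤ ζ * Real.exp (-C1 * (t' - s (k - 1))) * V (s (k - 1)))
    (hsafeLast : V t ≤ ζ * Real.exp (-C1 * (t - s n)) * V (s n))
    (hattack : ∀ k, 1 ≤ k → k ≤ n → ∀ t' ∈ Set.Icc (h k) (s k),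
      V t' ≤ ζ * C4 * Real.exp (C2 * (t' - h k)) * V (h k)) :
    V t ≤ ζ ^ (2 * n + 1) * C4 ^ n *
      Real.exp (-C1 * (t - ∑ k ∈ Finset.Icc 1 n, (s k - h k))) *
      Real.exp (C2 * ∑ k ∈ Finset.Icc 1 n, (s k - h k)) * V 0 := by
  set Ω : ℕ → ℝ := fun m => ∑ k ∈ Finset.Icc 1 m, (s k - h k) with hΩ
  have key : ∀ m, m ≤ n →
      V (s m) ≤ ζ ^ (2 * m) * C4 ^ m *
        Real.exp (-C1 * (s m - Ω m)) * Real.exp (C2 * Ω m) * V 0 := by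
    intro m
    induction m with
    | zero =>
      intro _
      simp [hΩ, hs0]
    | succ m ih =>
      intro hmn
      have hm : m ≤ n := Nat.le_of_succ_le hmn
      have ihm := ih hm
      have h1 : 1 ≤ m + 1 := Nat.le_add_left 1 m
      have hord := horder (m + 1) h1 hmn
      have hsm : s (m + 1 - 1) = s m := by norm_num
      -- safe interval bound at t' = h (m+1)
      have hsafe' := hsafe (m + 1) h1 hmn (h (m + 1))
        ⟨by rw [hsm] at hord ⊢; exact hord.1, le_refl _⟩
      rw [hsm] at hsafe'
      -- attack interval bound at t' = s (m+1)
      have hatt := hattack (m + 1) h1 hmn (s (m + 1)) ⟨hord.2, le_refl _⟩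
      -- chain
      have hζC4 : (0:ℝ) ≤ ζ * C4 * Real.exp (C2 * (s (m+1) - h (m+1))) :=
        by positivity
      have step1 : V (s (m + 1)) ≤ ζ * C4 * Real.exp (C2 * (s (m+1) - h (m+1))) *
          (ζ * Real.exp (-C1 * (h (m+1) - s m)) * V (s m)) :=
        le_trans hatt (by
          apply mul_le_mul_of_nonneg_left hsafe' hζC4)
      have step2 : ζ * C4 * Real.exp (C2 * (s (m+1) - h (m+1))) *
          (ζ * Real.exp (-C1 * (h (m+1) - s m)) * V (s m)) ≤
          ζ * C4 * Real.exp (C2 * (s (m+1) - h (m+1))) *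
          (ζ * Real.exp (-C1 * (h (m+1) - s m)) *
            (ζ ^ (2 * m) * C4 ^ m *
              Real.exp (-C1 * (s m - Ω m)) * Real.exp (C2 * Ω m) * V 0)) := by
        apply mul_le_mul_of_nonneg_left _ hζC4
        apply mul_le_mul_of_nonneg_left ihm (by positivity)
      have hΩsucc : Ω (m + 1) = Ω m + (s (m+1) - h (m+1)) := by
        simp only [hΩ]
        rw [Finset.sum_Icc_succ_top h1]
      refine le_trans (le_trans step1 step2) (le_of_eq ?_)
      rw [hΩsucc]
      rw [show -C1 * (s (m+1) - (Ω m + (s (m+1) - h (m+1)))) =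
            -C1 * (h (m+1) - s m) + -C1 * (s m - Ω m) by ring]
      rw [show C2 * (Ω m + (s (m+1) - h (m+1))) =
            C2 * (s (m+1) - h (m+1)) + C2 * Ω m by ring]
      rw [Real.exp_add, Real.exp_add]
      ring
  have hkey := key n le_rfl
  have hfin : V t ≤ ζ * Real.exp (-C1 * (t - s n)) *
      (ζ ^ (2 * n) * C4 ^ n *
        Real.exp (-C1 * (s n - Ω n)) * Real.exp (C2 * Ω n) * V 0) :=
    le_trans hsafeLast (mul_le_mul_of_nonneg_left hkey (by positivity))
  refine le_trans hfin (le_of_eq ?_)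
  rw [show (∑ k ∈ Finset.Icc 1 n, (s k - h k)) = Ω n from by simp [hΩ]]
  rw [show -C1 * (t - Ω n) = -C1 * (t - s n) + -C1 * (s n - Ω n) by ring,
    Real.exp_add, pow_succ]
  ring
end

section
/- Let Q be an n×n real matrix and R an m×m real symmetric matrix, let J be a finite index set with m×m real matrices R_j for j ∈ J, and let q, λmin, λmax, r_j, M be positive reals with λmax ≥ 1 satisfying: q·‖x‖² ≤ xᵀQx for all x ∈ ℝⁿ; λmin·‖y‖² ≤ yᵀRy ≤ λmax·‖y‖² for all y ∈ ℝᵐ; and r_j·‖y‖² ≤ yᵀR_jy for all y ∈ ℝᵐ and j ∈ J. Let e, δ ∈ ℝⁿ and u*, v, u_j ∈ ℝᵐ satisfy ‖u* − v‖ ≤ M‖δ‖ and the event-triggering condition λmax²·M²·‖δ‖² ≤ Σ_{j∈J} r_j‖u_j‖² + λmin‖v‖². Then −eᵀQe − Σ_{j∈J} u_jᵀR_j u_j + (u* − v)ᵀR(u* − v) − vᵀRv ≤ −q·‖e‖². -/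
open Matrix

lemma mul_sq_le_sq_mul_sq {a b c : ℝ} (hc : 1 ≤ c) (ha : 0 ≤ a) (hab : a ≤ b) :
    c * a ^ 2 ≤ c ^ 2 * b ^ 2 :=
  calc c * a ^ 2 ≤ c * b ^ 2 := by gcongr
    _ ≤ c ^ 2 * b ^ 2 := by gcongr; exact le_self_pow₀ hc two_ne_zero

theorem stmt_5_general (n m : ℕ) (Q : Matrix (Fin n) (Fin n) ℝ) (R : Matrix (Fin m) (Fin m) ℝ)
    (J : Type*) [Fintype J] (Rj : J → Matrix (Fin m) (Fin m) ℝ)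
    (q lammin lammax : ℝ) (r : J → ℝ) (M : ℝ)
    (hlammax1 : 1 ≤ lammax)
    (hQ : ∀ x : EuclideanSpace ℝ (Fin n), q * ‖x‖ ^ 2 ≤ x ⬝ᵥ Q.mulVec x)
    (hRlow : ∀ y : EuclideanSpace ℝ (Fin m), lammin * ‖y‖ ^ 2 ≤ y ⬝ᵥ R.mulVec y)
    (hRhigh : ∀ y : EuclideanSpace ℝ (Fin m), y ⬝ᵥ R.mulVec y ≤ lammax * ‖y‖ ^ 2)
    (hRj : ∀ (j : J) (y : EuclideanSpace ℝ (Fin m)), r j * ‖y‖ ^ 2 ≤ y ⬝ᵥ (Rj j).mulVec y)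
    (e δ : EuclideanSpace ℝ (Fin n)) (ustar v : EuclideanSpace ℝ (Fin m))
    (uj : J → EuclideanSpace ℝ (Fin m))
    (hLip : ‖ustar - v‖ ≤ M * ‖δ‖)
    (hTrig : lammax ^ 2 * M ^ 2 * ‖δ‖ ^ 2 ≤ ∑ j, r j * ‖uj j‖ ^ 2 + lammin * ‖v‖ ^ 2) :
    -(e ⬝ᵥ Q.mulVec e) - ∑ j, (uj j) ⬝ᵥ (Rj j).mulVec (uj j)
      + (ustar - v) ⬝ᵥ R.mulVec (ustar - v) - v ⬝ᵥ R.mulVec v ≤ -q * ‖e‖ ^ 2 := by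
  have hsampling : (ustar - v) ⬝ᵥ R.mulVec (ustar - v) ≤ lammax ^ 2 * M ^ 2 * ‖δ‖ ^ 2 := by
    rw [mul_assoc, ← mul_pow]
    exact (hRhigh (ustar - v)).trans (mul_sq_le_sq_mul_sq hlammax1 (norm_nonneg _) hLip)
  have hcost : ∑ j, r j * ‖uj j‖ ^ 2 ≤ ∑ j, (uj j) ⬝ᵥ (Rj j).mulVec (uj j) :=
    Finset.sum_le_sum fun j _ => hRj j (uj j)
  -- by `hTrig`, the control costs absorb the sampling error, leaving `-eᵀQe`
  linarith [hQ e, hRlow v]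

/-- Algebraic core of inequalities (20)–(21) in Theorem 1: under the
Lipschitz sampling bound `‖u* - v‖ ≤ M‖δ‖` and the event-triggering condition
`λmax²·M²·‖δ‖² ≤ Σ_j r_j‖u_j‖² + λmin‖v‖²` (with `λmax ≥ 1` and the stated
quadratic-form bounds for `Q`, `R`, `R_j`), one has
`-eᵀQe - Σ_j u_jᵀR_j u_j + (u* - v)ᵀR(u* - v) - vᵀRv ≤ -q·‖e‖²`. -/
theorem stmt_5 (n m : ℕ) (Q : Matrix (Fin n) (Fin n) ℝ) (R : Matrix (Fin m) (Fin m) ℝ)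
    (hRsymm : R.IsSymm)
    (J : Type*) [Fintype J] (Rj : J → Matrix (Fin m) (Fin m) ℝ)
    (q lammin lammax : ℝ) (r : J → ℝ) (M : ℝ)
    (hq : 0 < q) (hlammin : 0 < lammin) (hlammax : 0 < lammax) (hr : ∀ j, 0 < r j)
    (hM : 0 < M) (hlammax1 : 1 ≤ lammax)
    (hQ : ∀ x : EuclideanSpace ℝ (Fin n), q * ‖x‖ ^ 2 ≤ x ⬝ᵥ Q.mulVec x)
    (hRlow : ∀ y : EuclideanSpace ℝ (Fin m), lammin * ‖y‖ ^ 2 ≤ y ⬝ᵥ R.mulVec y)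
    (hRhigh : ∀ y : EuclideanSpace ℝ (Fin m), y ⬝ᵥ R.mulVec y ≤ lammax * ‖y‖ ^ 2)
    (hRj : ∀ (j : J) (y : EuclideanSpace ℝ (Fin m)), r j * ‖y‖ ^ 2 ≤ y ⬝ᵥ (Rj j).mulVec y)
    (e δ : EuclideanSpace ℝ (Fin n)) (ustar v : EuclideanSpace ℝ (Fin m))
    (uj : J → EuclideanSpace ℝ (Fin m))
    (hLip : ‖ustar - v‖ ≤ M * ‖δ‖)
    (hTrig : lammax ^ 2 * M ^ 2 * ‖δ‖ ^ 2 ≤ ∑ j, r j * ‖uj j‖ ^ 2 + lammin * ‖v‖ ^ 2) :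
    -(e ⬝ᵥ Q.mulVec e) - ∑ j, (uj j) ⬝ᵥ (Rj j).mulVec (uj j)
      + (ustar - v) ⬝ᵥ R.mulVec (ustar - v) - v ⬝ᵥ R.mulVec v ≤ -q * ‖e‖ ^ 2 :=
  stmt_5_general n m Q R J Rj q lammin lammax r M hlammax1 hQ hRlow hRhigh hRj e δ ustar v uj hLip
    hTrig
end

section
/- Let Γ̃, ς be vectors in ℝ^N, ε ∈ ℝ, and m₁, ς̄, ε̄, α positive reals such that: m₁·‖Γ̃‖² ≤ ⟨ς, Γ̃⟩², ‖ς‖ ≤ ς̄, |ε| ≤ ε̄, α·ς̄² ≤ 1/2, and ‖Γ̃‖² ≥ ε̄²/m₁. Then ‖Γ̃ − α·(⟨ς, Γ̃⟩ + ε)·ς‖ ≤ ‖Γ̃‖. -/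
set_option maxHeartbeats 1000000


open scoped RealInnerProductSpace

/-- Key contraction property behind Theorem 2 (uniform ultimate
boundedness of the critic weight estimation error): under the persistent-excitation
bound `m₁‖Γ̃‖² ≤ ⟨ς, Γ̃⟩²`, the regressor bound `‖ς‖ ≤ ς̄`, the residual bound
`|ε| ≤ ε̄`, a small learning rate `α·ς̄² ≤ 1/2`, and error norm above the noise level
`‖Γ̃‖² ≥ ε̄²/m₁`, the update `Γ̃ - α·(⟨ς, Γ̃⟩ + ε)·ς` does not increase the norm. -/
theorem stmt_9 (N : ℕ) (Γtilde ς : EuclideanSpace ℝ (Fin N)) (ε : ℝ)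
    (m1 ςbar εbar α : ℝ) (hm1 : 0 < m1) (hςbar : 0 < ςbar) (hεbar : 0 < εbar)
    (hα : 0 < α)
    (hPE : m1 * ‖Γtilde‖ ^ 2 ≤ ⟪ς, Γtilde⟫ ^ 2)
    (hς : ‖ς‖ ≤ ςbar) (hε : |ε| ≤ εbar)
    (hαsmall : α * ςbar ^ 2 ≤ 1 / 2)
    (hbig : εbar ^ 2 / m1 ≤ ‖Γtilde‖ ^ 2) :
    ‖Γtilde - (α * (⟪ς, Γtilde⟫ + ε)) • ς‖ ≤ ‖Γtilde‖ := by
  set s : ℝ := ⟪ς, Γtilde⟫ with hs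
  set c : ℝ := α * (s + ε) with hc
  -- s² ≥ ε̄² ≥ ε²
  have hs2 : εbar ^ 2 ≤ s ^ 2 := by
    have h1 : εbar ^ 2 ≤ m1 * ‖Γtilde‖ ^ 2 := by
      rw [div_le_iff₀ hm1] at hbig; linarith [mul_comm m1 (‖Γtilde‖ ^ 2)]
    linarith
  have hε2 : ε ^ 2 ≤ s ^ 2 := le_trans (by nlinarith [abs_nonneg ε, sq_abs ε]) hs2
  have hες : |ε| ≤ |s| := by
    nlinarith [sq_abs ε, sq_abs s, abs_nonneg ε, abs_nonneg s]
  have hexp : ‖Γtilde - c • ς‖ ^ 2 = ‖Γtilde‖ ^ 2 - 2 * (c * s) + c ^ 2 * ‖ς‖ ^ 2 := by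
    rw [norm_sub_sq_real, real_inner_smul_right, norm_smul, real_inner_comm]
    simp only [← hs, mul_pow, Real.norm_eq_abs, sq_abs]
  have hςς : α * ‖ς‖ ^ 2 ≤ 1 / 2 := by
    have : ‖ς‖ ^ 2 ≤ ςbar ^ 2 := by nlinarith [norm_nonneg ς]
    nlinarith
  have key : ‖Γtilde - c • ς‖ ^ 2 ≤ ‖Γtilde‖ ^ 2 := by
    rw [hexp]
    have h1 : c ^ 2 * ‖ς‖ ^ 2 ≤ α / 2 * (s + ε) ^ 2 := by
      have : c ^ 2 * ‖ς‖ ^ 2 = (α * (s + ε) ^ 2) * (α * ‖ς‖ ^ 2) := by rw [hc]; ring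
      rw [this]
      have hnn : 0 ≤ α * (s + ε) ^ 2 := by positivity
      nlinarith
    have h2 : α / 2 * (s + ε) ^ 2 ≤ 2 * (c * s) := by
      rw [hc]
      have habs : -ε * s ≤ s ^ 2 := by nlinarith [abs_mul ε s, neg_abs_le (ε * s), sq_abs s]
      nlinarith
    linarith
  have h := norm_nonneg (Γtilde - c • ς)
  nlinarith [norm_nonneg Γtilde]
end

section
/- Let δ : ℝ → ℝⁿ be differentiable on [t₀, t₁] (t₀ < t₁) with δ(t₀) = 0, and suppose there are constants C₆ > 0 and C₇ > 0 such that ‖δ′(t)‖ ≤ C₆·‖δ(t)‖ + C₇ for all t ∈ [t₀, t₁]. If S > 0 and ‖δ(t₁)‖ ≥ S, then t₁ − t₀ ≥ (1/C₆)·ln(1 + C₆·S/C₇), and this lower bound is strictly positive. -/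
/-- Theorem 3 (no Zeno behavior): between consecutive triggering
instants the measurement error `δ` starts at zero and obeys
`‖δ'(t)‖ ≤ C₆·‖δ(t)‖ + C₇`; if the event fires at `t₁`, i.e. `‖δ(t₁)‖ ≥ S > 0`,
then the inter-event time satisfies `t₁ - t₀ ≥ (1/C₆)·ln(1 + C₆·S/C₇)`, and this
lower bound is strictly positive. -/
theorem stmt_12 (n : ℕ) (δ δ' : ℝ → EuclideanSpace ℝ (Fin n)) (t₀ t₁ : ℝ)
    (ht : t₀ < t₁) (C₆ C₇ : ℝ) (hC₆ : 0 < C₆) (hC₇ : 0 < C₇)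
    (hzero : δ t₀ = 0)
    (hderiv : ∀ t ∈ Set.Icc t₀ t₁, HasDerivAt δ (δ' t) t)
    (hbound : ∀ t ∈ Set.Icc t₀ t₁, ‖δ' t‖ ≤ C₆ * ‖δ t‖ + C₇)
    (S : ℝ) (hS : 0 < S) (hfire : S ≤ ‖δ t₁‖) :
    (1 / C₆) * Real.log (1 + C₆ * S / C₇) ≤ t₁ - t₀ ∧
    0 < (1 / C₆) * Real.log (1 + C₆ * S / C₇) := by
  have hpos : 0 < C₆ * S / C₇ := by positivity
  have hgron := norm_le_gronwallBound_of_norm_deriv_right_le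
    (f := δ) (f' := δ') (δ := 0) (K := C₆) (ε := C₇) (a := t₀) (b := t₁)
    (fun t htmem => ((hderiv t htmem).continuousAt).continuousWithinAt)
    (fun t htmem => ((hderiv t ⟨htmem.1, htmem.2.le⟩).hasDerivWithinAt))
    (by simp [hzero])
    (fun t htmem => hbound t ⟨htmem.1, htmem.2.le⟩)
    t₁ ⟨ht.le, le_rfl⟩
  rw [gronwallBound_of_K_ne_0 hC₆.ne'] at hgron
  simp only [zero_mul, zero_add] at hgron
  have hSle : S ≤ C₇ / C₆ * (Real.exp (C₆ * (t₁ - t₀)) - 1) := hfire.trans hgron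
  have hexp : 1 + C₆ * S / C₇ ≤ Real.exp (C₆ * (t₁ - t₀)) := by
    have h3 : C₆ * S ≤ C₇ * (Real.exp (C₆ * (t₁ - t₀)) - 1) := by
      calc C₆ * S ≤ C₆ * (C₇ / C₆ * (Real.exp (C₆ * (t₁ - t₀)) - 1)) :=
            mul_le_mul_of_nonneg_left hSle hC₆.le
        _ = C₇ * (Real.exp (C₆ * (t₁ - t₀)) - 1) := by field_simp
    have h2 : C₆ * S / C₇ ≤ Real.exp (C₆ * (t₁ - t₀)) - 1 := by
      rw [div_le_iff₀ hC₇]; linarith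
    linarith
  have hlog : Real.log (1 + C₆ * S / C₇) ≤ C₆ * (t₁ - t₀) := by
    calc Real.log (1 + C₆ * S / C₇) ≤ Real.log (Real.exp (C₆ * (t₁ - t₀))) :=
          Real.log_le_log (by linarith) hexp
      _ = C₆ * (t₁ - t₀) := Real.log_exp _
  constructor
  · rw [div_mul_eq_mul_div, one_mul, div_le_iff₀ hC₆]
    linarith [hlog]
  · have : 0 < Real.log (1 + C₆ * S / C₇) := Real.log_pos (by linarith)
    positivity
end
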